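/- arXiv:2106.06749 — 4 statements merged into one kernel-verified Lean document; each statement's English description precedes it below -/
import Mathlib

section
/- (Lemma A1) Let n ≥ 1 and let a_1, …, a_n be nonnegative real numbers. Then Σ_{i=1}^n a_i / √(Σ_{j=1}^i a_j) ≤ 2·√(Σ_{i=1}^n a_i), where any term with zero denominator is interpreted as 0 (convention x/0 = 0). -/
lemma key_step (S b : ℝ) (hS : 0 ≤ S) (hb : 0 ≤ b) :
    b / Real.sqrt (S + b) ≤ 2 * (Real.sqrt (S + b) - Real.sqrt S) := by
  rcases eq_or_lt_of_le (add_nonneg hS hb) with h | h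
  · have hb0 : b = 0 := by linarith
    have hS0 : S = 0 := by linarith
    simp [hb0, hS0]
  · have hT : (0:ℝ) < Real.sqrt (S + b) := Real.sqrt_pos.2 h
    rw [div_le_iff₀ hT]
    have h1 := Real.sq_sqrt hS
    have h2 := Real.sq_sqrt h.le
    have h3 := sq_nonneg (Real.sqrt S - Real.sqrt (S + b))
    nlinarith

/-- Lemma A1: for nonnegative reals `a 1, …, a n`,
`∑_{i=1}^n a i / √(∑_{j=1}^i a j) ≤ 2 √(∑_{i=1}^n a i)`,
with the convention `x / 0 = 0` (which is Lean's default). -/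
theorem lemma_A1 (n : ℕ) (hn : 1 ≤ n) (a : ℕ → ℝ)
    (ha : ∀ i ∈ Finset.Icc 1 n, 0 ≤ a i) :
    ∑ i ∈ Finset.Icc 1 n, a i / Real.sqrt (∑ j ∈ Finset.Icc 1 i, a j)
      ≤ 2 * Real.sqrt (∑ i ∈ Finset.Icc 1 n, a i) := by
  induction n, hn using Nat.le_induction with
  | base =>
    simp only [Finset.Icc_self, Finset.sum_singleton]
    have h1 : 0 ≤ a 1 := ha 1 (by simp)
    rcases eq_or_lt_of_le h1 with h | h
    · simp [← h]
    · rw [Real.div_sqrt]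
      nlinarith [Real.sqrt_nonneg (a 1)]
  | succ n hn ih =>
    have ha' : ∀ i ∈ Finset.Icc 1 n, 0 ≤ a i := fun i hi => by
      refine ha i ?_
      simp only [Finset.mem_Icc] at hi ⊢; omega
    have hsum : 0 ≤ ∑ j ∈ Finset.Icc 1 n, a j :=
      Finset.sum_nonneg fun i hi => ha' i hi
    rw [Finset.sum_Icc_succ_top (by omega : 1 ≤ n + 1),
        Finset.sum_Icc_succ_top (by omega : 1 ≤ n + 1)]
    have key := key_step (∑ j ∈ Finset.Icc 1 n, a j) (a (n+1)) hsum
      (ha (n+1) (by simp))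
    linarith [ih ha']
end

section
/- (Lemma A3) Let d ≥ 1, T ≥ 1, and let g_1, …, g_T ∈ ℝ^d be arbitrary vectors. Let m_t, v_t, r_t, η̂_t be defined by the DSTAdam recursions with parameters α > 0, 0 < r_l ≤ r_u, 0 ≤ ρ_t ≤ ρ for some ρ ∈ (0,1), 0 ≤ β_{1t} ≤ β_1 for some β_1 ∈ [0,1), and 0 ≤ β_{2t} < 1. Assume condition (C1): there is ζ > 0 such that √(t·v_{t,i}) ≥ (1/ζ)·√(Σ_{j=1}^t g_{j,i}²) for all t ∈ {1,…,T} and i ∈ {1,…,d}. Then Σ_{t=1}^T (1/√t)·Σ_{i=1}^d η̂_{t,i}·m_{t,i}² ≤ (2αρζ/(1−β_1)²)·Σ_{i=1}^d ‖g_{1:T,i}‖_2 + (r_u·√(1 + log T)/(1−β_1)²)·Σ_{i=1}^d ‖g²_{1:T,i}‖_2. -/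
open Finset
set_option maxHeartbeats 1000000

private lemma geom_bound (r : ℝ) (h0 : 0 ≤ r) (h1 : r < 1) (n : ℕ) :
    ∑ k ∈ range n, r ^ k ≤ 1 / (1 - r) := by
  have h : (0:ℝ) < 1 - r := by linarith
  have hne : r - 1 ≠ 0 := by linarith
  have hne' : (1:ℝ) - r ≠ 0 := by linarith
  have he : ∑ k ∈ range n, r ^ k = (1 - r ^ n) / (1 - r) := by
    rw [geom_sum_eq (ne_of_lt h1)]
    field_simp
    ring
  rw [he]
  have hp : (0:ℝ) ≤ r ^ n := pow_nonneg h0 n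
  gcongr
  linarith

private lemma geom_Icc (r : ℝ) (h0 : 0 ≤ r) (h1 : r < 1) (j T : ℕ) :
    ∑ t ∈ Icc j T, r ^ (t - j) ≤ 1 / (1 - r) := by
  rw [← Finset.Ico_add_one_right_eq_Icc, Finset.sum_Ico_eq_sum_range]
  simp only [Nat.add_sub_cancel_left]
  exact geom_bound r h0 h1 _

private lemma sum_div_sqrt (T : ℕ) (a : ℕ → ℝ) (ha : ∀ j, 0 ≤ a j) :
    ∑ j ∈ Icc 1 T, a j / Real.sqrt (∑ k ∈ Icc 1 j, a k)
      ≤ 2 * Real.sqrt (∑ k ∈ Icc 1 T, a k) := by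
  induction T with
  | zero => simp
  | succ n ih =>
    rw [Finset.sum_Icc_succ_top (Nat.le_add_left 1 n),
        Finset.sum_Icc_succ_top (Nat.le_add_left 1 n)]
    set S := ∑ k ∈ Icc 1 n, a k with hSdef
    have hS0 : 0 ≤ S := Finset.sum_nonneg fun j _ => ha j
    have hS'0 : 0 ≤ S + a (n+1) := by linarith [ha (n+1)]
    have key : a (n+1) / Real.sqrt (S + a (n+1)) ≤
        2 * Real.sqrt (S + a (n+1)) - 2 * Real.sqrt S := by
      rcases eq_or_lt_of_le hS'0 with h | h
      · have hS : S = 0 := by linarith [ha (n+1)]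
        have ha' : a (n+1) = 0 := by linarith
        simp [← h, hS, ha']
      · have hx : Real.sqrt (S + a (n+1)) > 0 := Real.sqrt_pos.mpr h
        rw [div_le_iff₀ hx]
        have h1 : Real.sqrt (S + a (n+1)) ^ 2 = S + a (n+1) := Real.sq_sqrt hS'0
        have h2 : Real.sqrt S ^ 2 = S := Real.sq_sqrt hS0
        have h3 : 0 ≤ Real.sqrt S := Real.sqrt_nonneg S
        nlinarith [sq_nonneg (Real.sqrt (S + a (n+1)) - Real.sqrt S)]
    linarith [ih]

private lemma harm_bound (T : ℕ) : ∑ j ∈ Icc 1 T, 1/(j:ℝ) ≤ 1 + Real.log T := by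
  have h := harmonic_le_one_add_log T
  have he : ((harmonic T : ℚ) : ℝ) = ∑ j ∈ Icc 1 T, 1/(j:ℝ) := by
    rw [harmonic_eq_sum_Icc]
    push_cast
    simp [one_div]
  linarith

/-- Lemma A3: under the DSTAdam recursions and condition (C1),
`∑_{t=1}^T (1/√t) ∑_{i=1}^d η̂_{t,i} m_{t,i}²
  ≤ (2αρζ/(1-β₁)²) ∑_i ‖g_{1:T,i}‖₂ + (r_u √(1+log T)/(1-β₁)²) ∑_i ‖g²_{1:T,i}‖₂`.
Division by zero is interpreted as `0` (Lean's default). -/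
theorem lemma_A3
    (d T : ℕ) (hd : 1 ≤ d) (hT : 1 ≤ T)
    (g m v : ℕ → Fin d → ℝ)
    (ρₜ β₁ₜ β₂ₜ : ℕ → ℝ) (r : ℕ → ℝ) (ηhat : ℕ → Fin d → ℝ)
    (α ρ β₁ rl ru ζ : ℝ)
    (hα : 0 < α) (hrl : 0 < rl) (hrlu : rl ≤ ru)
    (hρ0 : 0 < ρ) (hρ1 : ρ < 1) (hρₜ : ∀ t, 0 ≤ ρₜ t ∧ ρₜ t ≤ ρ)
    (hβ₁0 : 0 ≤ β₁) (hβ₁1 : β₁ < 1) (hβ₁ₜ : ∀ t, 0 ≤ β₁ₜ t ∧ β₁ₜ t ≤ β₁)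
    (hβ₂ₜ : ∀ t, 0 ≤ β₂ₜ t ∧ β₂ₜ t < 1)
    (hm0 : ∀ i, m 0 i = 0) (hv0 : ∀ i, v 0 i = 0)
    (hm : ∀ t ∈ Icc 1 T, ∀ i, m t i = β₁ₜ t * m (t - 1) i + (1 - β₁ₜ t) * g t i)
    (hv : ∀ t ∈ Icc 1 T, ∀ i, v t i = β₂ₜ t * v (t - 1) i + (1 - β₂ₜ t) * (g t i) ^ 2)
    (hr : ∀ t ∈ Icc 1 T, r t = (ru - rl) * (1 - (t : ℝ) / (T : ℝ)) + rl)
    (hηhat : ∀ t ∈ Icc 1 T, ∀ i,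
        ηhat t i = ρₜ t * (α / Real.sqrt (v t i) - r t) + r t)
    (hζ : 0 < ζ)
    (hC1 : ∀ t ∈ Icc 1 T, ∀ i,
        Real.sqrt ((t : ℝ) * v t i) ≥ (1 / ζ) * Real.sqrt (∑ j ∈ Icc 1 t, (g j i) ^ 2)) :
    ∑ t ∈ Icc 1 T, (1 / Real.sqrt t) * ∑ i, ηhat t i * (m t i) ^ 2
      ≤ 2 * α * ρ * ζ / (1 - β₁) ^ 2 * ∑ i, Real.sqrt (∑ t ∈ Icc 1 T, (g t i) ^ 2)
        + ru * Real.sqrt (1 + Real.log T) / (1 - β₁) ^ 2 *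
            ∑ i, Real.sqrt (∑ t ∈ Icc 1 T, (g t i) ^ 4) := by
  classical
  have hβd : (0:ℝ) < 1 - β₁ := by linarith
  have hT0 : (0:ℝ) < T := by exact_mod_cast hT
  set S : ℕ → Fin d → ℝ := fun t i => ∑ j ∈ Icc 1 t, (g j i)^2 with hSdef
  set A : ℕ → Fin d → ℝ := fun t i => ∑ j ∈ Icc 1 t, β₁^(t - j) * (g j i)^2 with hAdef
  have hSnn : ∀ t i, 0 ≤ S t i := fun t i => Finset.sum_nonneg fun j _ => sq_nonneg _
  have hAnn : ∀ t i, 0 ≤ A t i :=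
    fun t i => Finset.sum_nonneg fun j _ => mul_nonneg (pow_nonneg hβ₁0 _) (sq_nonneg _)
  have hArec : ∀ n i, A (n+1) i = β₁ * A n i + (g (n+1) i)^2 := by
    intro n i
    show (∑ j ∈ Icc 1 (n+1), β₁^(n+1 - j) * (g j i)^2)
        = β₁ * ∑ j ∈ Icc 1 n, β₁^(n - j) * (g j i)^2 + (g (n+1) i)^2
    rw [Finset.sum_Icc_succ_top (Nat.le_add_left 1 n), Finset.mul_sum]
    have hcg : ∀ j ∈ Icc 1 n, β₁ ^ (n + 1 - j) * g j i ^ 2 = β₁ * (β₁ ^ (n - j) * g j i ^2) := by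
      intro j hj
      rw [mem_Icc] at hj
      rw [show n + 1 - j = (n - j) + 1 by omega, pow_succ]
      ring
    rw [Finset.sum_congr rfl hcg]
    simp
  have hmA : ∀ t, t ≤ T → ∀ i, (m t i)^2 * (1 - β₁) ≤ A t i := by
    intro t
    induction t with
    | zero =>
      intro _ i
      have : A 0 i = 0 := by simp [hAdef]
      simp [hm0, this]
    | succ n ih =>
      intro hle i
      have hmem : n+1 ∈ Icc 1 T := mem_Icc.mpr ⟨Nat.le_add_left 1 n, hle⟩
      have hrec := hm (n+1) hmem i
      rw [Nat.add_sub_cancel] at hrec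
      have hb := hβ₁ₜ (n+1)
      have ihn := ih (Nat.le_of_succ_le hle) i
      have hAn := hAnn n i
      rw [hArec n i]
      have hβle1 : β₁ₜ (n+1) ≤ 1 := hb.2.trans hβ₁1.le
      have conv : (m (n+1) i)^2 ≤ β₁ₜ (n+1) * (m n i)^2 + (1 - β₁ₜ (n+1)) * (g (n+1) i)^2 := by
        rw [hrec]
        nlinarith [mul_nonneg (mul_nonneg hb.1 (sub_nonneg.mpr hβle1))
          (sq_nonneg (m n i - g (n+1) i))]
      have h1 := mul_le_mul_of_nonneg_right conv hβd.le
      have h2 := mul_nonneg hb.1 (sub_nonneg.mpr ihn)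
      have h3 := mul_nonneg (sub_nonneg.mpr hb.2) hAn
      have h4 := mul_nonneg (mul_nonneg hb.1 hβd.le) (sq_nonneg (g (n+1) i))
      have h5 := mul_nonneg hβ₁0 (sq_nonneg (g (n+1) i))
      nlinarith [h1, h2, h3, h4, h5]
  -- per-coordinate bound
  have main_i : ∀ i : Fin d,
      ∑ t ∈ Icc 1 T, (1/Real.sqrt t) * (ηhat t i * (m t i)^2)
        ≤ 2 * α * ρ * ζ / (1 - β₁) ^ 2 * Real.sqrt (S T i)
          + ru * Real.sqrt (1 + Real.log T) / (1 - β₁) ^ 2 *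
              Real.sqrt (∑ t ∈ Icc 1 T, (g t i)^4) := by
    intro i
    -- pointwise bound
    have hpt : ∀ t ∈ Icc 1 T, (1/Real.sqrt t) * (ηhat t i * (m t i)^2)
        ≤ ρ*α*ζ/(1-β₁) * (A t i / Real.sqrt (S t i))
          + ru/(1-β₁) * ((1/Real.sqrt t) * A t i) := by
      intro t ht
      obtain ⟨ht1, htT⟩ := mem_Icc.mp ht
      have htpos : (0:ℝ) < t := by exact_mod_cast ht1
      have hst : 0 < Real.sqrt t := Real.sqrt_pos.mpr htpos
      have hmb := hmA t htT i
      have hAt := hAnn t i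
      have hSt := hSnn t i
      have hm2A : (m t i)^2 ≤ A t i / (1-β₁) := (le_div_iff₀ hβd).mpr hmb
      have hρt := hρₜ t
      have hrt := hr t ht
      have hru0 : (0:ℝ) < ru := lt_of_lt_of_le hrl hrlu
      have hrb : 0 < r t ∧ r t ≤ ru := by
        have h1 : (t:ℝ)/T ≤ 1 := by
          rw [div_le_one hT0]
          exact_mod_cast htT
        have h2 : 0 ≤ (t:ℝ)/T := by positivity
        constructor
        · rw [hrt]; nlinarith
        · rw [hrt]; nlinarith
      have hηeq : ηhat t i = ρₜ t * (α / Real.sqrt (v t i)) + (1 - ρₜ t) * r t := by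
        rw [hηhat t ht i]; ring
      have p2 : (1/Real.sqrt t) * ((1 - ρₜ t) * r t * (m t i)^2)
          ≤ ru/(1-β₁) * ((1/Real.sqrt t) * A t i) := by
        have h1 : (1 - ρₜ t) * r t ≤ ru := by nlinarith [hρt.1, hρt.2, hρ1, hrb.1, hrb.2]
        have h3 : (1 - ρₜ t) * r t * (m t i)^2 ≤ ru * (A t i/(1-β₁)) :=
          mul_le_mul h1 hm2A (sq_nonneg _) hru0.le
        calc (1/Real.sqrt t) * ((1 - ρₜ t) * r t * (m t i)^2)
            ≤ (1/Real.sqrt t) * (ru * (A t i/(1-β₁))) := by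
              apply mul_le_mul_of_nonneg_left h3
              positivity
          _ = ru/(1-β₁) * ((1/Real.sqrt t) * A t i) := by ring
      have p1 : (1/Real.sqrt t) * (ρₜ t * (α/Real.sqrt (v t i)) * (m t i)^2)
          ≤ ρ*α*ζ/(1-β₁) * (A t i / Real.sqrt (S t i)) := by
        rcases eq_or_lt_of_le hSt with hS0 | hSpos
        · have hgz : ∀ j ∈ Icc 1 t, (g j i)^2 = 0 := by
            intro j hj
            exact (Finset.sum_eq_zero_iff_of_nonneg
              (fun k _ => sq_nonneg (g k i))).mp hS0.symm j hj
          have hAz : A t i = 0 := Finset.sum_eq_zero fun j hj => by rw [hgz j hj, mul_zero]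
          have hmz : (m t i)^2 = 0 := by nlinarith [hmb, sq_nonneg (m t i), hAz]
          rw [hmz, hAz]
          simp
        · have hsS : 0 < Real.sqrt (S t i) := Real.sqrt_pos.mpr hSpos
          have hc1 : Real.sqrt ((t:ℝ) * v t i) ≥ 1/ζ * Real.sqrt (S t i) := hC1 t ht i
          have htv : Real.sqrt (S t i) ≤ ζ * Real.sqrt ((t:ℝ) * v t i) := by
            have h2 := mul_le_mul_of_nonneg_left hc1 hζ.le
            have h3 : ζ * (1/ζ * Real.sqrt (S t i)) = Real.sqrt (S t i) := by
              field_simp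
            linarith
          have htvpos : 0 < Real.sqrt ((t:ℝ)*v t i) := by nlinarith
          have hvpos : 0 < v t i := by
            by_contra hv'
            push_neg at hv'
            have hnp : (t:ℝ) * v t i ≤ 0 := mul_nonpos_of_nonneg_of_nonpos htpos.le hv'
            have h0 : Real.sqrt ((t:ℝ)*v t i) = 0 := Real.sqrt_eq_zero'.mpr (by linarith)
            linarith
          have hsv : 0 < Real.sqrt (v t i) := Real.sqrt_pos.mpr hvpos
          have hmul : Real.sqrt (t:ℝ) * Real.sqrt (v t i) = Real.sqrt ((t:ℝ)* v t i) :=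
            (Real.sqrt_mul htpos.le _).symm
          have hfrac : (1/Real.sqrt t) * (α/Real.sqrt (v t i)) ≤ α*ζ/Real.sqrt (S t i) := by
            rw [div_mul_div_comm, one_mul, hmul, div_le_div_iff₀ htvpos hsS]
            nlinarith [mul_le_mul_of_nonneg_left htv hα.le]
          calc (1/Real.sqrt t) * (ρₜ t * (α/Real.sqrt (v t i)) * (m t i)^2)
              = ρₜ t * ((1/Real.sqrt t) * (α/Real.sqrt (v t i))) * (m t i)^2 := by ring
            _ ≤ ρ * (α*ζ/Real.sqrt (S t i)) * (A t i/(1-β₁)) := by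
                apply mul_le_mul ?_ hm2A (sq_nonneg _) ?_
                · apply mul_le_mul hρt.2 hfrac ?_ hρ0.le
                  positivity
                · positivity
            _ = ρ*α*ζ/(1-β₁) * (A t i / Real.sqrt (S t i)) := by ring
      calc (1/Real.sqrt t) * (ηhat t i * (m t i)^2)
          = (1/Real.sqrt t) * (ρₜ t * (α/Real.sqrt (v t i)) * (m t i)^2)
            + (1/Real.sqrt t) * ((1 - ρₜ t) * r t * (m t i)^2) := by rw [hηeq]; ring
        _ ≤ _ := add_le_add p1 p2
    have hswap : ∀ (F : ℕ → ℕ → ℝ), ∑ t ∈ Icc 1 T, ∑ j ∈ Icc 1 t, F t j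
        = ∑ j ∈ Icc 1 T, ∑ t ∈ Icc j T, F t j := by
      intro F
      apply Finset.sum_comm'
      intro x y
      simp only [mem_Icc]
      omega
    have hsum1 : ∑ t ∈ Icc 1 T, A t i / Real.sqrt (S t i)
        ≤ (1/(1-β₁)) * ∑ j ∈ Icc 1 T, (g j i)^2 / Real.sqrt (S j i) := by
      have step1 : ∀ t ∈ Icc 1 T, A t i / Real.sqrt (S t i)
          ≤ ∑ j ∈ Icc 1 t, β₁^(t-j) * ((g j i)^2 / Real.sqrt (S j i)) := by
        intro t ht
        show (∑ j ∈ Icc 1 t, β₁^(t - j) * (g j i)^2) / Real.sqrt (S t i) ≤ _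
        rw [Finset.sum_div]
        apply Finset.sum_le_sum
        intro j hj
        obtain ⟨hj1, hjt⟩ := mem_Icc.mp hj
        rcases eq_or_ne (g j i) 0 with hg | hg
        · simp [hg]
        · have hSj : 0 < S j i := by
            have hgpos : (0:ℝ) < (g j i)^2 := by positivity
            exact Finset.sum_pos' (fun k _ => sq_nonneg _)
              ⟨j, mem_Icc.mpr ⟨hj1, le_refl j⟩, hgpos⟩
          have hmono : S j i ≤ S t i :=
            Finset.sum_le_sum_of_subset_of_nonneg (Icc_subset_Icc_right hjt)
              (fun k _ _ => sq_nonneg _)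
          rw [mul_div_assoc]
          apply mul_le_mul_of_nonneg_left ?_ (pow_nonneg hβ₁0 _)
          exact div_le_div_of_nonneg_left (sq_nonneg _) (Real.sqrt_pos.mpr hSj)
            (Real.sqrt_le_sqrt hmono)
      calc ∑ t ∈ Icc 1 T, A t i / Real.sqrt (S t i)
          ≤ ∑ t ∈ Icc 1 T, ∑ j ∈ Icc 1 t, β₁^(t-j) * ((g j i)^2 / Real.sqrt (S j i)) :=
            Finset.sum_le_sum step1
        _ = ∑ j ∈ Icc 1 T, ∑ t ∈ Icc j T, β₁^(t-j) * ((g j i)^2 / Real.sqrt (S j i)) :=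
            hswap _
        _ = ∑ j ∈ Icc 1 T, (∑ t ∈ Icc j T, β₁^(t-j)) * ((g j i)^2 / Real.sqrt (S j i)) := by
            exact Finset.sum_congr rfl fun j _ => (Finset.sum_mul _ _ _).symm
        _ ≤ ∑ j ∈ Icc 1 T, (1/(1-β₁)) * ((g j i)^2 / Real.sqrt (S j i)) := by
            apply Finset.sum_le_sum
            intro j _
            apply mul_le_mul_of_nonneg_right (geom_Icc β₁ hβ₁0 hβ₁1 j T)
            positivity
        _ = (1/(1-β₁)) * ∑ j ∈ Icc 1 T, (g j i)^2 / Real.sqrt (S j i) :=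
            (Finset.mul_sum _ _ _).symm
    have hsum2 : ∑ j ∈ Icc 1 T, (g j i)^2 / Real.sqrt (S j i) ≤ 2 * Real.sqrt (S T i) := by
      have := sum_div_sqrt T (fun j => (g j i)^2) (fun j => sq_nonneg _)
      simpa [hSdef] using this
    have hsum3 : ∑ t ∈ Icc 1 T, (1/Real.sqrt t) * A t i
        ≤ (1/(1-β₁)) * ∑ j ∈ Icc 1 T, (g j i)^2 * (1/Real.sqrt j) := by
      have step1 : ∀ t ∈ Icc 1 T, (1/Real.sqrt t) * A t i
          ≤ ∑ j ∈ Icc 1 t, β₁^(t-j) * ((g j i)^2 * (1/Real.sqrt j)) := by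
        intro t ht
        obtain ⟨ht1, _⟩ := mem_Icc.mp ht
        show (1/Real.sqrt t) * (∑ j ∈ Icc 1 t, β₁^(t - j) * (g j i)^2) ≤ _
        rw [Finset.mul_sum]
        apply Finset.sum_le_sum
        intro j hj
        obtain ⟨hj1, hjt⟩ := mem_Icc.mp hj
        have hjpos : (0:ℝ) < j := by exact_mod_cast hj1
        have hsj : 0 < Real.sqrt j := Real.sqrt_pos.mpr hjpos
        have hmono : Real.sqrt (j:ℝ) ≤ Real.sqrt (t:ℝ) := by
          apply Real.sqrt_le_sqrt
          exact_mod_cast hjt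
        have hfr : (1:ℝ)/Real.sqrt t ≤ 1/Real.sqrt j :=
          one_div_le_one_div_of_le hsj hmono
        calc (1/Real.sqrt t) * (β₁^(t-j) * (g j i)^2)
            ≤ (1/Real.sqrt j) * (β₁^(t-j) * (g j i)^2) := by
              apply mul_le_mul_of_nonneg_right hfr
              positivity
          _ = β₁^(t-j) * ((g j i)^2 * (1/Real.sqrt j)) := by ring
      calc ∑ t ∈ Icc 1 T, (1/Real.sqrt t) * A t i
          ≤ ∑ t ∈ Icc 1 T, ∑ j ∈ Icc 1 t, β₁^(t-j) * ((g j i)^2 * (1/Real.sqrt j)) :=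
            Finset.sum_le_sum step1
        _ = ∑ j ∈ Icc 1 T, ∑ t ∈ Icc j T, β₁^(t-j) * ((g j i)^2 * (1/Real.sqrt j)) :=
            hswap _
        _ = ∑ j ∈ Icc 1 T, (∑ t ∈ Icc j T, β₁^(t-j)) * ((g j i)^2 * (1/Real.sqrt j)) := by
            exact Finset.sum_congr rfl fun j _ => (Finset.sum_mul _ _ _).symm
        _ ≤ ∑ j ∈ Icc 1 T, (1/(1-β₁)) * ((g j i)^2 * (1/Real.sqrt j)) := by
            apply Finset.sum_le_sum
            intro j _
            apply mul_le_mul_of_nonneg_right (geom_Icc β₁ hβ₁0 hβ₁1 j T)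
            positivity
        _ = (1/(1-β₁)) * ∑ j ∈ Icc 1 T, (g j i)^2 * (1/Real.sqrt j) :=
            (Finset.mul_sum _ _ _).symm
    have hsum4 : ∑ j ∈ Icc 1 T, (g j i)^2 * (1/Real.sqrt j)
        ≤ Real.sqrt (∑ j ∈ Icc 1 T, (g j i)^4) * Real.sqrt (1 + Real.log T) := by
      have hcs := Finset.sum_mul_sq_le_sq_mul_sq (Icc 1 T)
        (fun j => (g j i)^2) (fun j => 1/Real.sqrt j)
      have h1 : ∑ j ∈ Icc 1 T, ((g j i)^2)^2 = ∑ j ∈ Icc 1 T, (g j i)^4 := by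
        apply Finset.sum_congr rfl
        intro j _
        ring
      have h2 : ∑ j ∈ Icc 1 T, ((1:ℝ)/Real.sqrt j)^2 ≤ 1 + Real.log T := by
        have heq : ∀ j ∈ Icc 1 T, ((1:ℝ)/Real.sqrt j)^2 = 1/(j:ℝ) := by
          intro j _
          rw [div_pow, one_pow, Real.sq_sqrt (Nat.cast_nonneg j)]
        rw [Finset.sum_congr rfl heq]
        exact harm_bound T
      have hQnn : (0:ℝ) ≤ ∑ j ∈ Icc 1 T, (g j i)^4 :=
        Finset.sum_nonneg fun j _ => by positivity
      have hnn : (0:ℝ) ≤ ∑ j ∈ Icc 1 T, (g j i)^2 * (1/Real.sqrt j) :=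
        Finset.sum_nonneg fun j _ => by positivity
      have key : (∑ j ∈ Icc 1 T, (g j i)^2 * (1/Real.sqrt j))^2
          ≤ (∑ j ∈ Icc 1 T, (g j i)^4) * (1 + Real.log T) := by
        calc (∑ j ∈ Icc 1 T, (g j i)^2 * (1/Real.sqrt j))^2
            ≤ (∑ j ∈ Icc 1 T, ((g j i)^2)^2) * ∑ j ∈ Icc 1 T, ((1:ℝ)/Real.sqrt j)^2 := hcs
          _ ≤ (∑ j ∈ Icc 1 T, (g j i)^4) * (1 + Real.log T) := by
              rw [h1]
              exact mul_le_mul_of_nonneg_left h2 hQnn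
      calc ∑ j ∈ Icc 1 T, (g j i)^2 * (1/Real.sqrt j)
          = Real.sqrt ((∑ j ∈ Icc 1 T, (g j i)^2 * (1/Real.sqrt j))^2) :=
            (Real.sqrt_sq hnn).symm
        _ ≤ Real.sqrt ((∑ j ∈ Icc 1 T, (g j i)^4) * (1 + Real.log T)) :=
            Real.sqrt_le_sqrt key
        _ = Real.sqrt (∑ j ∈ Icc 1 T, (g j i)^4) * Real.sqrt (1 + Real.log T) :=
            Real.sqrt_mul hQnn _
    have hc1 : (0:ℝ) ≤ ρ*α*ζ/(1-β₁) := by positivity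
    have hc2 : (0:ℝ) ≤ ru/(1-β₁) := by
      have : (0:ℝ) < ru := lt_of_lt_of_le hrl hrlu
      positivity
    calc ∑ t ∈ Icc 1 T, (1/Real.sqrt t) * (ηhat t i * (m t i)^2)
        ≤ ∑ t ∈ Icc 1 T, (ρ*α*ζ/(1-β₁) * (A t i / Real.sqrt (S t i))
            + ru/(1-β₁) * ((1/Real.sqrt t) * A t i)) := Finset.sum_le_sum hpt
      _ = ρ*α*ζ/(1-β₁) * (∑ t ∈ Icc 1 T, A t i / Real.sqrt (S t i))
            + ru/(1-β₁) * (∑ t ∈ Icc 1 T, (1/Real.sqrt t) * A t i) := by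
          rw [Finset.sum_add_distrib, Finset.mul_sum, Finset.mul_sum]
      _ ≤ ρ*α*ζ/(1-β₁) * ((1/(1-β₁)) * (2 * Real.sqrt (S T i)))
            + ru/(1-β₁) * ((1/(1-β₁)) *
              (Real.sqrt (∑ j ∈ Icc 1 T, (g j i)^4) * Real.sqrt (1 + Real.log T))) := by
          apply add_le_add
          · exact mul_le_mul_of_nonneg_left
              (hsum1.trans (by
                apply mul_le_mul_of_nonneg_left hsum2
                positivity)) hc1
          · exact mul_le_mul_of_nonneg_left
              (hsum3.trans (by
                apply mul_le_mul_of_nonneg_left hsum4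
                positivity)) hc2
      _ = 2 * α * ρ * ζ / (1 - β₁) ^ 2 * Real.sqrt (S T i)
            + ru * Real.sqrt (1 + Real.log T) / (1 - β₁) ^ 2 *
                Real.sqrt (∑ t ∈ Icc 1 T, (g t i)^4) := by
          field_simp
  calc ∑ t ∈ Icc 1 T, (1 / Real.sqrt t) * ∑ i, ηhat t i * (m t i) ^ 2
      = ∑ i, ∑ t ∈ Icc 1 T, (1/Real.sqrt t) * (ηhat t i * (m t i)^2) := by
        rw [Finset.sum_comm]
        exact Finset.sum_congr rfl fun t _ => Finset.mul_sum _ _ _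
    _ ≤ ∑ i, (2 * α * ρ * ζ / (1 - β₁) ^ 2 * Real.sqrt (S T i)
          + ru * Real.sqrt (1 + Real.log T) / (1 - β₁) ^ 2 *
              Real.sqrt (∑ t ∈ Icc 1 T, (g t i)^4)) := Finset.sum_le_sum fun i _ => main_i i
    _ = 2 * α * ρ * ζ / (1 - β₁) ^ 2 * ∑ i, Real.sqrt (∑ t ∈ Icc 1 T, (g t i) ^ 2)
          + ru * Real.sqrt (1 + Real.log T) / (1 - β₁) ^ 2 *
              ∑ i, Real.sqrt (∑ t ∈ Icc 1 T, (g t i) ^ 4) := by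
        rw [Finset.sum_add_distrib, Finset.mul_sum, Finset.mul_sum]
end

section
/- (Second-moment bound for exponential moving averages) Let β_1 ∈ [0,1), let β_{11}, β_{12}, … be reals with 0 ≤ β_{1j} ≤ β_1 for all j, let g_1, g_2, … be real numbers, and define m_0 = 0 and m_t = β_{1t}·m_{t−1} + (1 − β_{1t})·g_t for t ≥ 1. Then for every t ≥ 1, m_t² ≤ (Σ_{j=1}^t β_1^{t−j}) · (Σ_{j=1}^t β_1^{t−j}·g_j²), and hence m_t² ≤ (1/(1−β_1))·Σ_{j=1}^t β_1^{t−j}·g_j². -/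
/-!
By convexity of `x ↦ x²`, `m_t² ≤ β_{1t} m_{t-1}² + (1 - β_{1t}) g_t² ≤ β₁ m_{t-1}² + g_t²`, and
unrolling this from `m_0 = 0` gives the sharper bound `m_t² ≤ ∑_{j=1}^t β₁^{t-j} g_j²`. Both claims
follow, since for `t ≥ 1` the factors `∑_{j=1}^t β₁^{t-j}` and `1 / (1 - β₁)` are at least `1`.
-/

open Finset

lemma sq_convex_comb_le {a : ℝ} (ha0 : 0 ≤ a) (ha1 : a ≤ 1) (x y : ℝ) :
    (a * x + (1 - a) * y) ^ 2 ≤ a * x ^ 2 + (1 - a) * y ^ 2 := by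
  nlinarith [mul_nonneg (mul_nonneg ha0 (sub_nonneg.mpr ha1)) (sq_nonneg (x - y))]

lemma sum_Icc_pow_mul_succ (β : ℝ) (f : ℕ → ℝ) (t : ℕ) :
    ∑ j ∈ Icc 1 (t + 1), β ^ (t + 1 - j) * f j
      = β * ∑ j ∈ Icc 1 t, β ^ (t - j) * f j + f (t + 1) := by
  rw [sum_Icc_succ_top (by omega), Nat.sub_self, pow_zero, one_mul, mul_sum]
  congr 1
  refine sum_congr rfl fun j hj => ?_
  rw [Nat.sub_add_comm (mem_Icc.mp hj).2, pow_succ]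
  ring

lemma sum_Icc_pow_mul_nonneg {β : ℝ} (hβ : 0 ≤ β) {f : ℕ → ℝ} (hf : ∀ j, 0 ≤ f j) (t : ℕ) :
    0 ≤ ∑ j ∈ Icc 1 t, β ^ (t - j) * f j :=
  sum_nonneg fun j _ => mul_nonneg (pow_nonneg hβ _) (hf j)

lemma one_le_sum_Icc_pow {β : ℝ} (hβ : 0 ≤ β) {t : ℕ} (ht : 1 ≤ t) :
    1 ≤ ∑ j ∈ Icc 1 t, β ^ (t - j) := by
  obtain ⟨s, rfl⟩ := Nat.exists_eq_add_of_le' ht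
  have hsucc := sum_Icc_pow_mul_succ β (fun _ => 1) s
  have hnonneg := sum_Icc_pow_mul_nonneg hβ (f := fun _ => 1) (fun _ => zero_le_one) s
  simp only [mul_one] at hsucc hnonneg
  rw [hsucc]
  linarith [mul_nonneg hβ hnonneg]

lemma le_sum_Icc_pow_mul_of_le_mul_add {β : ℝ} (hβ : 0 ≤ β) {u f : ℕ → ℝ} (h0 : u 0 ≤ 0)
    (hstep : ∀ t, u (t + 1) ≤ β * u t + f (t + 1)) (t : ℕ) :
    u t ≤ ∑ j ∈ Icc 1 t, β ^ (t - j) * f j := by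
  induction t with
  | zero => simpa using h0
  | succ t ih =>
    rw [sum_Icc_pow_mul_succ]
    linarith [hstep t, mul_le_mul_of_nonneg_left ih hβ]

/-- Second-moment bound for exponential moving averages: with `m 0 = 0`,
`m t = β₁ₜ t * m (t-1) + (1 - β₁ₜ t) * g t` and `0 ≤ β₁ₜ j ≤ β₁ < 1`, we have
`(m t)² ≤ (∑_{j=1}^t β₁^{t-j}) (∑_{j=1}^t β₁^{t-j} (g j)²)`
and hence `(m t)² ≤ (1/(1-β₁)) ∑_{j=1}^t β₁^{t-j} (g j)²`. -/
theorem ema_second_moment_bound (β₁ : ℝ) (hβ₁0 : 0 ≤ β₁) (hβ₁1 : β₁ < 1)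
    (β₁ₜ : ℕ → ℝ) (hβ₁ₜ : ∀ j, 1 ≤ j → 0 ≤ β₁ₜ j ∧ β₁ₜ j ≤ β₁)
    (g m : ℕ → ℝ) (hm0 : m 0 = 0)
    (hm : ∀ t, 1 ≤ t → m t = β₁ₜ t * m (t - 1) + (1 - β₁ₜ t) * g t) :
    ∀ t, 1 ≤ t →
      (m t) ^ 2 ≤ (∑ j ∈ Finset.Icc 1 t, β₁ ^ (t - j)) *
          (∑ j ∈ Finset.Icc 1 t, β₁ ^ (t - j) * (g j) ^ 2) ∧
      (m t) ^ 2 ≤ (1 / (1 - β₁)) * ∑ j ∈ Finset.Icc 1 t, β₁ ^ (t - j) * (g j) ^ 2 := by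
  have hstep (t : ℕ) : m (t + 1) ^ 2 ≤ β₁ * m t ^ 2 + g (t + 1) ^ 2 := by
    obtain ⟨ha0, ha1⟩ := hβ₁ₜ (t + 1) (by omega)
    rw [hm (t + 1) (by omega), Nat.add_sub_cancel]
    nlinarith [sq_convex_comb_le ha0 (by linarith) (m t) (g (t + 1)),
      mul_le_mul_of_nonneg_right ha1 (sq_nonneg (m t)), mul_nonneg ha0 (sq_nonneg (g (t + 1)))]
  intro t ht
  have hsq : m t ^ 2 ≤ ∑ j ∈ Icc 1 t, β₁ ^ (t - j) * g j ^ 2 :=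
    le_sum_Icc_pow_mul_of_le_mul_add hβ₁0 (u := fun t => m t ^ 2) (by simp [hm0]) hstep t
  have hsum_nonneg := sum_Icc_pow_mul_nonneg hβ₁0 (fun j => sq_nonneg (g j)) t
  have hinv : 1 ≤ 1 / (1 - β₁) := by
    rw [le_div_iff₀ (by linarith)]
    linarith
  exact ⟨hsq.trans (le_mul_of_one_le_left hsum_nonneg (one_le_sum_Icc_pow hβ₁0 ht)),
    hsq.trans (le_mul_of_one_le_left hsum_nonneg hinv)⟩
end

section
/- (Sum exchange with partial-sum denominators) Let λ ∈ [0,1), let T ≥ 1, and let a_1, …, a_T be nonnegative real numbers. Then Σ_{t=1}^T Σ_{j=1}^t λ^{t−j}·a_j/√(Σ_{k=1}^j a_k) ≤ (1/(1−λ))·Σ_{t=1}^T a_t/√(Σ_{k=1}^t a_k) ≤ (2/(1−λ))·√(Σ_{t=1}^T a_t), where any term with zero denominator is interpreted as 0 (convention x/0 = 0). -/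
/-!
Exchanging the order of summation turns the discounted double sum into
`∑_j (∑_{t ≥ j} λ^{t-j}) b_j` with `b_j = a_j / √(a_1 + ⋯ + a_j)`, and each geometric
factor is at most `1/(1-λ)`. The remaining sum telescopes: with `S_j = a_1 + ⋯ + a_j`,
`a_j / √S_j ≤ 2 (√S_j - √S_{j-1})` because `S_j - S_{j-1} = (√S_j - √S_{j-1})(√S_j + √S_{j-1})`
and `√S_j + √S_{j-1} ≤ 2 √S_j`.
-/

open Finset

lemma sum_Icc_pow_sub_le {lam : ℝ} (hlam0 : 0 ≤ lam) (hlam1 : lam < 1) (j T : ℕ) :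
    ∑ t ∈ Icc j T, lam ^ (t - j) ≤ 1 / (1 - lam) := by
  rw [← Ico_add_one_right_eq_Icc, sum_Ico_eq_sum_range]
  simpa using geom_sum_Ico_le_of_lt_one (m := 0) (n := T + 1 - j) hlam0 hlam1

lemma sum_Icc_sum_Icc_pow_mul_le {lam : ℝ} (hlam0 : 0 ≤ lam) (hlam1 : lam < 1) (T : ℕ)
    (b : ℕ → ℝ) (hb : ∀ j ∈ Icc 1 T, 0 ≤ b j) :
    ∑ t ∈ Icc 1 T, ∑ j ∈ Icc 1 t, lam ^ (t - j) * b j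
      ≤ 1 / (1 - lam) * ∑ j ∈ Icc 1 T, b j := by
  rw [sum_comm' (t' := Icc 1 T) (s' := fun j => Icc j T) (by simp only [mem_Icc]; omega),
    mul_sum]
  gcongr with j hj
  rw [← sum_mul]
  exact mul_le_mul_of_nonneg_right (sum_Icc_pow_sub_le hlam0 hlam1 j T) (hb j hj)

lemma div_sqrt_add_le {s x : ℝ} (hs : 0 ≤ s) (hx : 0 ≤ x) :
    x / √(s + x) ≤ 2 * (√(s + x) - √s) := by
  rcases (add_nonneg hs hx).eq_or_lt with h | h
  · obtain rfl : s = 0 := by linarith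
    obtain rfl : x = 0 := by linarith
    simp
  have hu : 0 < √(s + x) := Real.sqrt_pos.mpr h
  rw [div_le_iff₀ hu]
  nlinarith [Real.sq_sqrt h.le, Real.sq_sqrt hs, Real.sqrt_nonneg s,
    sq_nonneg (√(s + x) - √s)]

lemma sum_Icc_div_sqrt_partial_sum_le (a : ℕ → ℝ) (T : ℕ) (ha : ∀ t ∈ Icc 1 T, 0 ≤ a t) :
    ∑ t ∈ Icc 1 T, a t / √(∑ k ∈ Icc 1 t, a k) ≤ 2 * √(∑ k ∈ Icc 1 T, a k) := by
  induction T with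
  | zero => simp
  | succ T ih =>
    have ha' : ∀ t ∈ Icc 1 T, 0 ≤ a t := fun t ht =>
      ha t (Icc_subset_Icc_right T.le_succ ht)
    rw [sum_Icc_succ_top (by omega), sum_Icc_succ_top (by omega)]
    have := div_sqrt_add_le (sum_nonneg ha') (ha (T + 1) (by simp))
    linarith [ih ha']

theorem sum_exchange_partial_sums_general (lam : ℝ) (hlam0 : 0 ≤ lam) (hlam1 : lam < 1)
    (T : ℕ) (a : ℕ → ℝ) (ha : ∀ t ∈ Finset.Icc 1 T, 0 ≤ a t) :
    (∑ t ∈ Finset.Icc 1 T, ∑ j ∈ Finset.Icc 1 t,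
        lam ^ (t - j) * a j / Real.sqrt (∑ k ∈ Finset.Icc 1 j, a k)
      ≤ (1 / (1 - lam)) * ∑ t ∈ Finset.Icc 1 T,
          a t / Real.sqrt (∑ k ∈ Finset.Icc 1 t, a k)) ∧
    ((1 / (1 - lam)) * ∑ t ∈ Finset.Icc 1 T,
          a t / Real.sqrt (∑ k ∈ Finset.Icc 1 t, a k)
      ≤ (2 / (1 - lam)) * Real.sqrt (∑ t ∈ Finset.Icc 1 T, a t)) := by
  constructor
  · simp_rw [mul_div_assoc]
    exact sum_Icc_sum_Icc_pow_mul_le hlam0 hlam1 T _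
      fun j hj => div_nonneg (ha j hj) (Real.sqrt_nonneg _)
  · calc 1 / (1 - lam) * ∑ t ∈ Icc 1 T, a t / √(∑ k ∈ Icc 1 t, a k)
        ≤ 1 / (1 - lam) * (2 * √(∑ t ∈ Icc 1 T, a t)) := by
          gcongr
          exact sum_Icc_div_sqrt_partial_sum_le a T ha
      _ = 2 / (1 - lam) * √(∑ t ∈ Icc 1 T, a t) := by ring

/-- Sum exchange with partial-sum denominators: for `λ ∈ [0,1)` and nonnegative
`a 1, …, a T`,
`∑_{t=1}^T ∑_{j=1}^t λ^{t-j} a j / √(∑_{k=1}^j a k)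
  ≤ (1/(1-λ)) ∑_{t=1}^T a t / √(∑_{k=1}^t a k) ≤ (2/(1-λ)) √(∑_{t=1}^T a t)`,
with the convention `x / 0 = 0` (Lean's default). -/
theorem sum_exchange_partial_sums (lam : ℝ) (hlam0 : 0 ≤ lam) (hlam1 : lam < 1)
    (T : ℕ) (hT : 1 ≤ T) (a : ℕ → ℝ) (ha : ∀ t ∈ Finset.Icc 1 T, 0 ≤ a t) :
    (∑ t ∈ Finset.Icc 1 T, ∑ j ∈ Finset.Icc 1 t,
        lam ^ (t - j) * a j / Real.sqrt (∑ k ∈ Finset.Icc 1 j, a k)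
      ≤ (1 / (1 - lam)) * ∑ t ∈ Finset.Icc 1 T,
          a t / Real.sqrt (∑ k ∈ Finset.Icc 1 t, a k)) ∧
    ((1 / (1 - lam)) * ∑ t ∈ Finset.Icc 1 T,
          a t / Real.sqrt (∑ k ∈ Finset.Icc 1 t, a k)
      ≤ (2 / (1 - lam)) * Real.sqrt (∑ t ∈ Finset.Icc 1 T, a t)) :=
  sum_exchange_partial_sums_general lam hlam0 hlam1 T a ha
end
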